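/- arXiv:1210.6825 — 2 statements merged into one kernel-verified Lean document; each statement's English description precedes it below -/
import Mathlib

section
/- Let A be a real n×n matrix such that trace(A) ≠ 0, let M = exp(sA) for some s ≠ 0, let 1 ≤ p < ∞, and let c = |det M|^{1/p}. If φ ∈ L^p(ℝⁿ) satisfies φ(v) = c · φ(Mv) for almost every v ∈ ℝⁿ, then φ = 0 almost everywhere. -/
/-!
With `δ = det M = exp (s * trace A) ≠ 1`, Lebesgue measure is rescaled by `δ⁻¹` under `v ↦ M v`,
whereas the self-similarity makes the finite measure `ν = ‖φ‖ₑ ^ p • volume` invariant under it.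
Pulling a set `E` of finite volume back along the contracting one of `M`, `M⁻¹` gives sets `Eₖ`
with `ν Eₖ = ν E` and `volume Eₖ → 0`, so `ν E = 0` by absolute continuity; by σ-finiteness
`ν = 0`, i.e. `φ = 0` a.e.

The determinant formula follows from the functional equation of `t ↦ det (exp (t • B))` and its
derivative `trace B` at `0`, the derivative of the row-multilinear determinant at the identity.
-/

open Filter MeasureTheory Matrix NormedSpace Topology
open scoped ENNReal

theorem Real.eq_exp_mul_of_map_add_eq_mul {f : ℝ → ℝ} {c : ℝ}
    (hadd : ∀ t u, f (t + u) = f t * f u) (h0 : f 0 = 1) (hc : HasDerivAt f c 0) (t : ℝ) :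
    f t = Real.exp (c * t) := by
  have hf : ∀ t, HasDerivAt f (f t * c) t := fun t ↦ by
    have h := hc.const_mul (f t)
    rw [← sub_self t] at h
    have h' := h.comp_sub_const t t
    have e : (fun x ↦ f t * f (x - t)) = f := funext fun x ↦ by rw [← hadd, add_sub_cancel]
    rwa [e] at h'
  have hF : ∀ u, HasDerivAt (fun u ↦ f u * Real.exp (-(c * u))) 0 u := fun u ↦
    ((hf u).mul (hasDerivAt_const_mul c).neg.exp).congr_deriv (by ring)
  have hconst := is_const_of_deriv_eq_zero (fun u ↦ (hF u).differentiableAt)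
    (fun u ↦ (hF u).deriv) t 0
  rw [h0, mul_zero, neg_zero, Real.exp_zero, mul_one] at hconst
  rw [← mul_one (Real.exp _), ← hconst, mul_left_comm, ← Real.exp_add]
  simp

namespace Matrix

variable {m : Type*} [Fintype m] [DecidableEq m]

theorem det_updateRow_one {R : Type*} [CommRing R] (i : m) (v : m → R) :
    (updateRow (1 : Matrix m m R) i v).det = v i := by
  rw [← transpose_one, updateRow_transpose, det_transpose, ← cramer_apply, cramer_one]
  rfl

noncomputable def detRowContinuousMultilinear : ContinuousMultilinearMap ℝ (fun _ : m ↦ m → ℝ) ℝ :=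
  { (detRowAlternating : (m → ℝ) [⋀^m]→ₗ[ℝ] ℝ).toMultilinearMap with
    cont := (continuous_id.matrix_det : Continuous fun A : Matrix m m ℝ ↦ A.det) }

theorem linearDeriv_det_one (B : Matrix m m ℝ) :
    detRowContinuousMultilinear.linearDeriv (of.symm 1) (of.symm B) = B.trace := by
  rw [ContinuousMultilinearMap.linearDeriv_apply]
  exact Finset.sum_congr rfl fun i _ ↦ det_updateRow_one i (B i)

attribute [local instance] Matrix.linftyOpNormedAddCommGroup Matrix.linftyOpNormedRing
  Matrix.linftyOpNormedAlgebra in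
theorem hasDerivAt_det_exp_smul_zero (B : Matrix m m ℝ) :
    HasDerivAt (fun t : ℝ ↦ (exp (t • B)).det) B.trace 0 := by
  have hexp := hasDerivAt_exp_smul_const (𝕂 := ℝ) B 0
  rw [zero_smul, exp_zero, one_mul] at hexp
  -- The identity, from the operator norm in which `exp` is differentiated to the product norm
  -- in which `det` is multilinear in the rows.
  let L : Matrix m m ℝ →L[ℝ] (m → m → ℝ) :=
    LinearMap.toContinuousLinearMap (ofLinearEquiv ℝ).symm.toLinearMap
  have hdet := (detRowContinuousMultilinear.hasFDerivAt (of.symm 1)).comp_hasDerivAt_of_eq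
    (0 : ℝ) (L.hasFDerivAt.comp_hasDerivAt (0 : ℝ) hexp) (by simp [L])
  exact (linearDeriv_det_one B) ▸ hdet

theorem det_exp (A : Matrix m m ℝ) : (exp A).det = Real.exp A.trace := by
  have hadd : ∀ t u : ℝ, (exp ((t + u) • A)).det = (exp (t • A)).det * (exp (u • A)).det :=
    fun t u ↦ by
      rw [add_smul, exp_add_of_commute _ _ (((Commute.refl A).smul_left t).smul_right u), det_mul]
  simpa using Real.eq_exp_mul_of_map_add_eq_mul hadd (by simp) (hasDerivAt_det_exp_smul_zero A) 1

end Matrix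

namespace MeasureTheory.Measure

variable {α : Type*} [MeasurableSpace α] {μ : Measure α}

theorem map_iterate_eq_pow_smul {T : α → α} (hT : Measurable T) {a : ℝ≥0∞}
    (hμ : μ.map T = a • μ) (k : ℕ) : μ.map T^[k] = a ^ k • μ := by
  induction k with
  | zero => simp
  | succ k ih =>
    rw [Function.iterate_succ, ← map_map (hT.iterate k) hT, hμ, Measure.map_smul, ih, smul_smul,
      pow_succ']

theorem map_withDensity_comp (T : α ≃ᵐ α) (g : α → ℝ≥0∞) :
    (μ.withDensity (g ∘ T)).map T = (μ.map T).withDensity g := by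
  ext s hs
  rw [T.map_apply, withDensity_apply _ (T.measurable hs), withDensity_apply _ hs, T.restrict_map,
    lintegral_map_equiv]
  rfl

theorem map_withDensity_eq_self (T : α ≃ᵐ α) {d : ℝ≥0∞} (hd0 : d ≠ 0) (hd : d ≠ ∞)
    (hμ : μ.map T = d⁻¹ • μ) {g : α → ℝ≥0∞} (hg : ∀ᵐ x ∂μ, g x = d * g (T x)) :
    (μ.withDensity g).map T = μ.withDensity g := by
  have hg' : μ.withDensity g = d • μ.withDensity (g ∘ T) := by
    rw [withDensity_congr_ae hg, ← withDensity_smul' _ _ hd]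
    rfl
  conv_lhs => rw [hg']
  rw [Measure.map_smul, map_withDensity_comp, hμ, withDensity_smul_measure, smul_smul,
    ENNReal.mul_inv_cancel hd0 hd, one_smul]

variable [SigmaFinite μ]

theorem eq_zero_of_forall_measure_eq_zero_of_lt_top {ν : Measure α}
    (h : ∀ s, MeasurableSet s → μ s < ∞ → ν s = 0) : ν = 0 := by
  rw [← measure_univ_eq_zero, ← iUnion_spanningSets μ]
  exact measure_iUnion_null fun k ↦ h _ (measurableSet_spanningSets μ k)
    (measure_spanningSets_lt_top μ k)

theorem withDensity_eq_zero_of_map_eq_self_of_lt_one {T : α → α} (hT : Measurable T) {a : ℝ≥0∞}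
    (ha : a < 1) (hμ : μ.map T = a • μ) {g : α → ℝ≥0∞} (hg : ∫⁻ x, g x ∂μ ≠ ∞)
    (hν : (μ.withDensity g).map T = μ.withDensity g) : μ.withDensity g = 0 := by
  refine eq_zero_of_forall_measure_eq_zero_of_lt_top (μ := μ) fun s hs hμs ↦ ?_
  have hpres : MeasurePreserving T (μ.withDensity g) (μ.withDensity g) := ⟨hT, hν⟩
  have hshrink : Tendsto (fun k ↦ μ (T^[k] ⁻¹' s)) atTop (𝓝 0) := by
    simp_rw [← map_apply (hT.iterate _) hs, map_iterate_eq_pow_smul hT hμ, smul_apply, smul_eq_mul]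
    simpa using ENNReal.Tendsto.mul_const (ENNReal.tendsto_pow_atTop_nhds_zero_of_lt_one ha)
      (Or.inr hμs.ne)
  have hvanish := tendsto_setLIntegral_zero hg hshrink
  simp_rw [← withDensity_apply _ ((hT.iterate _) hs),
    (hpres.iterate _).measure_preimage hs.nullMeasurableSet] at hvanish
  exact tendsto_nhds_unique tendsto_const_nhds hvanish

theorem withDensity_eq_zero_of_map_eq_self (T : α ≃ᵐ α) {a : ℝ≥0∞} (ha0 : a ≠ 0) (ha : a ≠ ∞)
    (ha1 : a ≠ 1) (hμ : μ.map T = a • μ) {g : α → ℝ≥0∞} (hg : ∫⁻ x, g x ∂μ ≠ ∞)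
    (hν : (μ.withDensity g).map T = μ.withDensity g) : μ.withDensity g = 0 := by
  rcases ha1.lt_or_gt with ha1 | ha1
  · exact withDensity_eq_zero_of_map_eq_self_of_lt_one T.measurable ha1 hμ hg hν
  · have hμ' : μ.map T.symm = a⁻¹ • μ := by
      conv_rhs => rw [← T.map_symm_map (μ := μ), hμ, Measure.map_smul, smul_smul,
        ENNReal.inv_mul_cancel ha0 ha, one_smul]
    have hν' : (μ.withDensity g).map T.symm = μ.withDensity g := by
      conv_lhs => rw [← hν, T.map_symm_map]
    exact withDensity_eq_zero_of_map_eq_self_of_lt_one T.symm.measurable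
      (ENNReal.inv_lt_one.2 ha1) hμ' hg hν'

end MeasureTheory.Measure

namespace MeasureTheory.MemLp

variable {α : Type*} [MeasurableSpace α] {μ : Measure α} [SigmaFinite μ]
  {𝕜 E : Type*} [NormedField 𝕜] [NormedAddCommGroup E] [NormedSpace 𝕜 E]

theorem ae_eq_zero_of_ae_eq_smul_comp {p : ℝ≥0∞} (hp0 : p ≠ 0) (hp : p ≠ ∞) {φ : α → E}
    (hφ : MemLp φ p μ) (T : α ≃ᵐ α) {c : 𝕜} (hc0 : c ≠ 0) (hc1 : ‖c‖ₑ ≠ 1)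
    (hμ : μ.map T = (‖c‖ₑ ^ p.toReal)⁻¹ • μ) (heq : ∀ᵐ x ∂μ, φ x = c • φ (T x)) :
    φ =ᵐ[μ] 0 := by
  have hq : 0 < p.toReal := ENNReal.toReal_pos hp0 hp
  set d := ‖c‖ₑ ^ p.toReal
  have hd0 : d ≠ 0 := (ENNReal.rpow_pos (enorm_pos.2 hc0) enorm_ne_top).ne'
  have hd : d ≠ ∞ := ENNReal.rpow_ne_top_of_nonneg hq.le enorm_ne_top
  have hd1 : d ≠ 1 := fun h ↦
    hc1 (ENNReal.rpow_left_injective hq.ne' (h.trans (ENNReal.one_rpow _).symm))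
  set g : α → ℝ≥0∞ := fun x ↦ ‖φ x‖ₑ ^ p.toReal
  have hrel : ∀ᵐ x ∂μ, g x = d * g (T x) := by
    filter_upwards [heq] with x hx
    simp only [g, d, hx, enorm_smul, ENNReal.mul_rpow_of_nonneg _ _ hq.le]
  have hν := Measure.map_withDensity_eq_self T hd0 hd hμ hrel
  have hzero := Measure.withDensity_eq_zero_of_map_eq_self T (ENNReal.inv_ne_zero.2 hd)
    (ENNReal.inv_ne_top.2 hd0) (by simpa using hd1) hμ
    (lintegral_rpow_enorm_lt_top_of_eLpNorm_lt_top hp0 hp hφ.eLpNorm_lt_top).ne hν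
  rw [withDensity_eq_zero_iff (hφ.1.enorm.pow_const _)] at hzero
  filter_upwards [hzero] with x hx
  simpa [g, hq] using hx

end MeasureTheory.MemLp

noncomputable def Matrix.mulVecMeasurableEquiv {ι : Type*} [Fintype ι] [DecidableEq ι]
    (M : Matrix ι ι ℝ) (hM : M.det ≠ 0) : (ι → ℝ) ≃ᵐ (ι → ℝ) :=
  ((toLin' M).equivOfDetNeZero (by rwa [LinearMap.det_toLin'])).toContinuousLinearEquiv
    |>.toHomeomorph.toMeasurableEquiv

/-- if `trace A ≠ 0`, `M = exp (s • A)` with `s ≠ 0`,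
`c = |det M| ^ (1/p)` and `φ ∈ L^p` satisfies `φ v = c * φ (M v)` a.e.,
then `φ = 0` a.e. -/
theorem eq_zero_of_self_similar_Lp
    {n : ℕ} (A : Matrix (Fin n) (Fin n) ℝ) (htr : A.trace ≠ 0)
    (s : ℝ) (hs : s ≠ 0) (M : Matrix (Fin n) (Fin n) ℝ)
    (hM : M = NormedSpace.exp (s • A))
    (p : ℝ≥0∞) (hp1 : 1 ≤ p) (hp2 : p ≠ ⊤)
    (c : ℝ) (hc : c = |M.det| ^ (1 / p.toReal))
    (φ : (Fin n → ℝ) → ℂ) (hφ : MemLp φ p volume)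
    (heq : ∀ᵐ v : Fin n → ℝ ∂volume, φ v = (c : ℂ) * φ (M.mulVec v)) :
    φ =ᵐ[volume] 0 := by
  have hp0 : p ≠ 0 := (zero_lt_one.trans_le hp1).ne'
  have hq : 0 < p.toReal := ENNReal.toReal_pos hp0 hp2
  have hdet : M.det = Real.exp (s * A.trace) := by rw [hM, det_exp, trace_smul, smul_eq_mul]
  have hdet_pos : 0 < M.det := hdet ▸ Real.exp_pos _
  have hdet_ne_one : ENNReal.ofReal M.det ≠ 1 := by
    rw [Ne, ENNReal.ofReal_eq_one, hdet, Real.exp_eq_one_iff]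
    exact mul_ne_zero hs htr
  have hc_pos : 0 < c := by rw [hc]; positivity
  have hcd : ‖(c : ℂ)‖ₑ ^ p.toReal = ENNReal.ofReal M.det := by
    rw [← ofReal_norm, Complex.norm_real, Real.norm_of_nonneg hc_pos.le,
      ENNReal.ofReal_rpow_of_nonneg hc_pos.le hq.le, hc, abs_of_pos hdet_pos,
      ← Real.rpow_mul hdet_pos.le, one_div_mul_cancel hq.ne', Real.rpow_one]
  have hvol : volume.map (M.mulVecMeasurableEquiv hdet_pos.ne') =
      (‖(c : ℂ)‖ₑ ^ p.toReal)⁻¹ • volume := by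
    rw [hcd, ← ENNReal.ofReal_inv_of_pos hdet_pos, ← abs_of_pos (inv_pos.2 hdet_pos)]
    exact Real.map_matrix_volume_pi_eq_smul_volume_pi hdet_pos.ne'
  refine hφ.ae_eq_zero_of_ae_eq_smul_comp hp0 hp2 (M.mulVecMeasurableEquiv hdet_pos.ne')
    (by exact_mod_cast hc_pos.ne') (fun h ↦ hdet_ne_one ?_) hvol heq
  rw [← hcd, h, ENNReal.one_rpow]
end

section
/- Let g : ℝ → ℂ be a measurable function, not a.e. zero, that vanishes outside a compact set. Then g has linearly independent translates: if Σ_{k=1}^m c_k g(x + t_k) = 0 for a.e. x ∈ ℝ with t₁ < t₂ < ⋯ < t_m distinct, then c₁ = ⋯ = c_m = 0. -/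
/-!
Let `M` be the essential supremum of the support of `g`, and among the translates with nonzero
coefficient let `k₀` be the one with the smallest shift. For `x + t k₀` just below `M`, every
other translate `g (x + t k)` is evaluated beyond `M`, where `g` vanishes almost everywhere, so the
relation reduces to `c k₀ * g (x + t k₀) = 0`. Hence `g` vanishes a.e. on an interval below `M`,
contradicting the minimality of `M`.
-/

open MeasureTheory Filter Topology Function

theorem ae_comp_add_right_iff {G : Type*} [AddGroup G] [MeasurableSpace G] [MeasurableAdd G]
    (μ : Measure G) [μ.IsAddRightInvariant] (a : G) {p : G → Prop} :
    (∀ᵐ x ∂μ, p (x + a)) ↔ ∀ᵐ x ∂μ, p x := by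
  conv_rhs => rw [← map_add_right_eq_self μ a]
  exact (measurableEmbedding_addRight a).ae_map_iff.symm

theorem exists_isLeast_ae_upperBounds (μ : Measure ℝ) {A : Set ℝ} (hA : μ A ≠ 0)
    (hbdd : BddAbove A) : ∃ M, IsLeast {y | ∀ᵐ x ∂μ, x ∈ A → x ≤ y} M := by
  set S := {y | ∀ᵐ x ∂μ, x ∈ A → x ≤ y}
  have hS : S.Nonempty :=
    let ⟨b, hb⟩ := hbdd
    ⟨b, ae_of_all μ fun _ hx => hb hx⟩
  have hS_bdd : BddBelow S := by
    by_contra hunbdd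
    refine hA (measure_eq_zero_iff_ae_notMem.2 ?_)
    have hle : ∀ n : ℕ, ∀ᵐ x ∂μ, x ∈ A → x ≤ -n := fun n => by
      obtain ⟨y, hyS, hy⟩ := not_bddBelow_iff.1 hunbdd (-n)
      filter_upwards [hyS] with x hx hxA using (hx hxA).trans hy.le
    filter_upwards [ae_all_iff.2 hle] with x hx hxA
    obtain ⟨n, hn⟩ := exists_nat_gt (-x)
    linarith [hx n hxA]
  obtain ⟨u, -, hu, huS⟩ := exists_seq_tendsto_sInf hS hS_bdd
  refine ⟨sInf S, ?_, fun y hy => csInf_le hS_bdd hy⟩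
  filter_upwards [ae_all_iff.2 huS] with x hx hxA using ge_of_tendsto' hu fun n => hx n hxA

theorem exists_lt_forall_le_add {ι : Type*} (s : Finset ι) {d : ι → ℝ} (hd : ∀ k ∈ s, 0 < d k)
    (M : ℝ) : ∃ y < M, ∀ k ∈ s, M ≤ y + d k := by
  have hev : ∀ᶠ y in 𝓝[<] M, ∀ k ∈ s, M ≤ y + d k :=
    (eventually_all_finset s).2 fun k hk =>
      ((eventually_gt_nhds (by linarith [hd k hk] : M - d k < M)).filter_mono
        nhdsWithin_le_nhds).mono fun y hy => by linarith
  obtain ⟨y, hy, hyM⟩ := (hev.and self_mem_nhdsWithin).exists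
  exact ⟨y, hyM, hy⟩

/-- `hy` says that once `x + t k₀ > y`, every other translate with nonzero coefficient is
evaluated beyond `M`, where `g` vanishes a.e. -/
theorem ae_le_of_sum_mul_translates_eq_zero {ι R : Type*} [Fintype ι] [Semiring R]
    [NoZeroDivisors R] (μ : Measure ℝ) [μ.IsAddRightInvariant] {g : ℝ → R} {t : ι → ℝ}
    {c : ι → R} (heq : ∀ᵐ x ∂μ, ∑ k, c k * g (x + t k) = 0) {M y : ℝ}
    (hM : ∀ᵐ x ∂μ, x ∈ support g → x ≤ M) {k₀ : ι} (hk₀ : c k₀ ≠ 0)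
    (hy : ∀ k ≠ k₀, c k ≠ 0 → M ≤ y + (t k - t k₀)) :
    ∀ᵐ x ∂μ, x ∈ support g → x ≤ y := by
  rw [← ae_comp_add_right_iff μ (t k₀)]
  have hshift : ∀ᵐ x ∂μ, ∀ k, x + t k ∈ support g → x + t k ≤ M :=
    ae_all_iff.2 fun k => (ae_comp_add_right_iff μ (t k)).2 hM
  filter_upwards [heq, hshift] with x hsum hx hx₀
  by_contra! hyx
  have hvanish : ∀ k ≠ k₀, c k * g (x + t k) = 0 := by
    intro k hk
    by_cases hck : c k = 0
    · rw [hck, zero_mul]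
    · have hg : g (x + t k) = 0 := by
        by_contra hg
        linarith [hx k hg, hy k hk hck]
      rw [hg, mul_zero]
  rw [Finset.sum_eq_single k₀ (fun k _ hk => hvanish k hk) (by simp)] at hsum
  exact mul_ne_zero hk₀ hx₀ hsum

theorem linearIndependent_translates_of_compact_support_general
    {m : ℕ} (g : ℝ → ℂ) (hne : ¬ g =ᵐ[volume] 0)
    (hsupp : ∃ K : Set ℝ, IsCompact K ∧ ∀ x ∉ K, g x = 0)
    (t : Fin m → ℝ) (ht : Function.Injective t) (c : Fin m → ℂ)
    (heq : ∀ᵐ x : ℝ ∂volume, ∑ k, c k * g (x + t k) = 0) :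
    c = 0 := by
  by_contra hc
  have hbdd : BddAbove (support g) := by
    obtain ⟨K, hK, hgK⟩ := hsupp
    exact hK.bddAbove.mono (support_subset_iff'.2 hgK)
  have hg : volume (support g) ≠ 0 := (Measure.measure_support_eq_zero_iff volume).not.2 hne
  obtain ⟨M, hM⟩ := exists_isLeast_ae_upperBounds volume hg hbdd
  set s := Finset.univ.filter fun k => c k ≠ 0
  have hs : s.Nonempty := by
    obtain ⟨k, hk⟩ := Function.ne_iff.1 hc
    exact ⟨k, by simpa [s] using hk⟩
  obtain ⟨k₀, hk₀s, hk₀min⟩ := s.exists_min_image t hs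
  have hgap : ∀ k ∈ s.erase k₀, 0 < t k - t k₀ := fun k hk => sub_pos.2 <|
    (hk₀min k (Finset.mem_of_mem_erase hk)).lt_of_ne (ht.ne (Finset.ne_of_mem_erase hk).symm)
  obtain ⟨y, hyM, hy⟩ := exists_lt_forall_le_add (s.erase k₀) (d := fun k => t k - t k₀) hgap M
  have hk₀ : c k₀ ≠ 0 := (Finset.mem_filter.1 hk₀s).2
  have hy_le : ∀ᵐ x ∂volume, x ∈ support g → x ≤ y :=
    ae_le_of_sum_mul_translates_eq_zero volume heq hM.1 hk₀
      fun k hk hck => hy k (by simp [s, hk, hck])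
  exact hyM.not_ge (hM.2 hy_le)

/-- a measurable function on `ℝ`, not a.e. zero, vanishing outside
a compact set, has linearly independent translates. -/
theorem linearIndependent_translates_of_compact_support
    {m : ℕ} (g : ℝ → ℂ) (hmeas : Measurable g) (hne : ¬ g =ᵐ[volume] 0)
    (hsupp : ∃ K : Set ℝ, IsCompact K ∧ ∀ x ∉ K, g x = 0)
    (t : Fin m → ℝ) (ht : Function.Injective t) (c : Fin m → ℂ)
    (heq : ∀ᵐ x : ℝ ∂volume, ∑ k, c k * g (x + t k) = 0) :
    c = 0 :=
  linearIndependent_translates_of_compact_support_general g hne hsupp t ht c heq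
end
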